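/- arXiv:1603.00114 — 2 statements merged into one kernel-verified Lean document; each statement's English description precedes it below -/
import Mathlib

section
/- Let Fr be the free group on r ≥ 1 generators s_1,…,s_r and X = (Z/2Z)^{F_r} with the left shift action. Then the assignment c(s_i, x) = x_{s_i} extends (uniquely) to a continuous cocycle c : F_r × X → Z/2Z, and this cocycle is not cohomologous to any homomorphism F_r → Z/2Z via a continuous transfer map. -/
/-!
A cocycle `c : G → X → A` for an action of `G` on `X` is the same thing as a homomorphic section
`g ↦ (c g ∘ (g⁻¹ • ·), g)` of the semidirect product `(X → A) ⋊ G → G`. On a free group such a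
section is freely determined by its values on the generators, which gives existence and uniqueness
of the cocycle; continuity spreads from the generators since the cocycle identity expresses
`c (g₁ * g₂)` and `c g⁻¹` through translates of `c g₁`, `c g₂` and `c g`.

If `c g x = -b (g • x) + φ g + b x`, then `c g x = φ g` at every fixed point `x` of `g`. The two
constant configurations are fixed by the whole shift, and `c (s₁, const a) = a` there, which would
force `φ s₁` to be both `0` and `1`.
-/

instance : TopologicalSpace (ZMod 2) := ⊥
instance : DiscreteTopology (ZMod 2) := ⟨rfl⟩

/-- The left shift action on `(ℤ/2ℤ)^{F_r}`: `(g·x)_h = x_{g⁻¹h}`. -/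
def frShift {r : ℕ} (g : FreeGroup (Fin r)) (x : FreeGroup (Fin r) → ZMod 2) :
    FreeGroup (Fin r) → ZMod 2 := fun h => x (g⁻¹ * h)

section Cocycle

variable {G X A : Type*} [Group G] [MulAction G X]

lemma mulAutArrow_apply_apply' {M : Type*} [Monoid M] (g : G) (F : X → M) (x : X) :
    mulAutArrow g F x = F (g⁻¹ • x) :=
  rfl

def IsCocycle [AddGroup A] (c : G → X → A) : Prop :=
  ∀ g₁ g₂ x, c (g₁ * g₂) x = c g₁ (g₂ • x) + c g₂ x

namespace IsCocycle

variable [AddGroup A] {c : G → X → A}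

lemma map_one (hc : IsCocycle c) (x : X) : c 1 x = 0 := by
  simpa using hc 1 1 x

lemma map_inv (hc : IsCocycle c) (g : G) (x : X) : c g⁻¹ x = -c g (g⁻¹ • x) := by
  refine (neg_eq_of_add_eq_zero_right ?_).symm
  rw [← hc, mul_inv_cancel, hc.map_one]

lemma continuous_of_closure_eq_top [TopologicalSpace X] [ContinuousConstSMul G X]
    [TopologicalSpace A] [IsTopologicalAddGroup A] (hc : IsCocycle c) {S : Set G}
    (hS : Subgroup.closure S = ⊤) (hS_cont : ∀ s ∈ S, Continuous (c s)) (g : G) :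
    Continuous (c g) := by
  have hg : g ∈ Subgroup.closure S := hS ▸ Subgroup.mem_top g
  induction hg using Subgroup.closure_induction with
  | mem s hs => exact hS_cont s hs
  | one => simpa only [funext hc.map_one] using continuous_const
  | mul g₁ g₂ _ _ h₁ h₂ =>
    rw [funext (hc g₁ g₂)]
    exact (h₁.comp (continuous_const_smul g₂)).add h₂
  | inv g _ h =>
    rw [funext (hc.map_inv g)]
    exact (h.comp (continuous_const_smul g⁻¹)).neg

def toSection (hc : IsCocycle c) : G →* (X → Multiplicative A) ⋊[mulAutArrow] G where
  toFun g := ⟨fun y => .ofAdd (c g (g⁻¹ • y)), g⟩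
  map_one' := by ext y <;> simp [hc.map_one]
  map_mul' g₁ g₂ := by
    ext y
    · simp [-mulAutArrow_apply_apply, mulAutArrow_apply_apply', hc g₁ g₂, mul_smul]
    · rfl

@[simp]
lemma toSection_apply (hc : IsCocycle c) (g : G) :
    hc.toSection g = ⟨fun y => .ofAdd (c g (g⁻¹ • y)), g⟩ :=
  rfl

lemma eq_of_toSection_eq {c' : G → X → A} (hc : IsCocycle c) (hc' : IsCocycle c')
    (h : hc.toSection = hc'.toSection) : c = c' := by
  funext g x
  simpa using congrArg (fun σ => (σ g).left (g • x)) h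

end IsCocycle

lemma isCocycle_of_section [AddGroup A] (σ : G →* (X → Multiplicative A) ⋊[mulAutArrow] G)
    (hσ : ∀ g, (σ g).right = g) : IsCocycle fun g x => ((σ g).left (g • x)).toAdd := by
  intro g₁ g₂ x
  simp [-mulAutArrow_apply_apply, mulAutArrow_apply_apply', hσ, mul_smul]

namespace FreeGroup

variable {ι : Type*} [MulAction (FreeGroup ι) X] [AddGroup A]

lemma isCocycle_ext {c c' : FreeGroup ι → X → A} (hc : IsCocycle c) (hc' : IsCocycle c')
    (h : ∀ i, c (of i) = c' (of i)) : c = c' :=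
  hc.eq_of_toSection_eq hc' <| ext_hom _ _ fun i => by simp [h i]

lemma exists_isCocycle (f : ι → X → A) :
    ∃ c : FreeGroup ι → X → A, IsCocycle c ∧ ∀ i x, c (of i) x = f i x := by
  let σ : FreeGroup ι →* (X → Multiplicative A) ⋊[mulAutArrow] FreeGroup ι :=
    lift fun i => ⟨fun y => .ofAdd (f i ((of i)⁻¹ • y)), of i⟩
  have hσ (g) : (σ g).right = g :=
    DFunLike.congr_fun (ext_hom (SemidirectProduct.rightHom.comp σ) (.id _) fun i => by simp [σ]) g
  exact ⟨_, isCocycle_of_section σ hσ, fun i x => by simp [σ]⟩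

theorem existsUnique_continuous_isCocycle [TopologicalSpace X]
    [ContinuousConstSMul (FreeGroup ι) X] [TopologicalSpace A] [IsTopologicalAddGroup A]
    (f : ι → X → A) (hf : ∀ i, Continuous (f i)) :
    ∃! c : FreeGroup ι → X → A,
      (∀ g, Continuous (c g)) ∧ IsCocycle c ∧ ∀ i x, c (of i) x = f i x := by
  obtain ⟨c, hc, hcf⟩ := exists_isCocycle f
  have hcf' (i) : c (of i) = f i := funext (hcf i)
  refine ⟨c, ⟨hc.continuous_of_closure_eq_top (closure_range_of ι) ?_, hc, hcf⟩, ?_⟩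
  · rintro _ ⟨i, rfl⟩
    simpa only [hcf'] using hf i
  · rintro c' ⟨-, hc', hc'f⟩
    exact isCocycle_ext hc' hc fun i => (funext (hc'f i)).trans (hcf' i).symm

end FreeGroup

lemma apply_eq_of_cohomologous_of_smul_eq {A : Type*} [AddCommGroup A] {c : G → X → A}
    {b : X → A} {φ : G → A} (h : ∀ g x, c g x = -b (g • x) + φ g + b x) {g : G} {x : X}
    (hx : g • x = x) : c g x = φ g := by
  rw [h, hx, neg_add_cancel_comm]

end Cocycle

section Shift

-- For the action of `F_r` on itself by left multiplication, `arrowAction` is `frShift` by `rfl`.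
attribute [local instance] arrowAction

instance {G α β : Type*} [Group G] [MulAction G α] [TopologicalSpace β] :
    ContinuousConstSMul G (α → β) :=
  ⟨fun _ => continuous_pi fun _ => continuous_apply _⟩

/-- on the full shift over the free group `F_r` (`r ≥ 1`), the
assignment `c(s_i,x) = x_{s_i}` extends uniquely to a continuous cocycle, and
any such cocycle is not cohomologous to a homomorphism via a continuous
transfer map. -/
theorem stmt_12 (r : ℕ) (hr : 1 ≤ r) :
    (∃! c : FreeGroup (Fin r) → (FreeGroup (Fin r) → ZMod 2) → ZMod 2,
      (∀ g, Continuous (c g)) ∧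
      (∀ g₁ g₂ x, c (g₁ * g₂) x = c g₁ (frShift g₂ x) + c g₂ x) ∧
      (∀ (i : Fin r) (x), c (FreeGroup.of i) x = x (FreeGroup.of i))) ∧
    (∀ c : FreeGroup (Fin r) → (FreeGroup (Fin r) → ZMod 2) → ZMod 2,
      (∀ g, Continuous (c g)) →
      (∀ g₁ g₂ x, c (g₁ * g₂) x = c g₁ (frShift g₂ x) + c g₂ x) →
      (∀ (i : Fin r) (x), c (FreeGroup.of i) x = x (FreeGroup.of i)) →
      ¬ ∃ (b : (FreeGroup (Fin r) → ZMod 2) → ZMod 2)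
          (φ : FreeGroup (Fin r) → ZMod 2),
          Continuous b ∧ (∀ g₁ g₂, φ (g₁ * g₂) = φ g₁ + φ g₂) ∧
          ∀ g x, c g x = -(b (frShift g x)) + φ g + b x) := by
  refine ⟨FreeGroup.existsUnique_continuous_isCocycle _ fun _ => continuous_apply _, ?_⟩
  rintro c - - hc_of ⟨b, φ, -, -, hcoh⟩
  have hφ (a : ZMod 2) : φ (.of ⟨0, hr⟩) = a := by
    rw [← apply_eq_of_cohomologous_of_smul_eq hcoh (x := fun _ => a) rfl, hc_of]
  exact zero_ne_one ((hφ 0).symm.trans (hφ 1))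

end Shift
end

section
/- Let G be a countable group acting on a compact metrizable space X by homeomorphisms such that the action is topologically mixing (for any two nonempty open U,V ⊆ X, gU ∩ V ≠ ∅ for all g outside some finite set). Let H be a group with a bi-invariant metric d, and let φ : X → H be a continuous function such that for some functions L₁, L₂ : G → H one has φ(x) = L₁(g)⁻¹ φ(gx) L₂(g) for all g ∈ G and x ∈ X. Then φ is constant on X. -/
/-- for a topologically mixing action of an infinite countable
group `G` on a compact metrizable space `X`, a continuous `φ : X → H` into a
group with bi-invariant metric which satisfies `φ(x) = L₁(g)⁻¹ φ(gx) L₂(g)`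
for all `g`, `x`, is constant. -/
theorem stmt_18 {G X H : Type*} [Group G] [Countable G] [Infinite G]
    [MulAction G X] [TopologicalSpace X] [CompactSpace X]
    [TopologicalSpace.MetrizableSpace X]
    (hact : ∀ g : G, Continuous fun x : X => g • x)
    (hmix : ∀ U V : Set X, IsOpen U → IsOpen V → U.Nonempty → V.Nonempty →
      ∃ F : Set G, F.Finite ∧ ∀ g ∈ Fᶜ, ((fun x => g • x) '' U ∩ V).Nonempty)
    [Group H] [MetricSpace H]
    (hleft : ∀ g x y : H, dist (g * x) (g * y) = dist x y)
    (hright : ∀ g x y : H, dist (x * g) (y * g) = dist x y)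
    (φ : X → H) (hφ : Continuous φ) (L₁ L₂ : G → H)
    (heq : ∀ (g : G) (x : X), φ x = (L₁ g)⁻¹ * φ (g • x) * L₂ g) :
    ∀ x y : X, φ x = φ y := by
  intro a b
  by_contra hne
  have hD : 0 < dist (φ a) (φ b) := dist_pos.mpr hne
  set D := dist (φ a) (φ b) with hDdef
  have hεpos : 0 < D / 5 := by positivity
  set ε := D / 5 with hεdef
  -- invariance of distances
  have hinv : ∀ (g : G) (x y : X), dist (φ (g • x)) (φ (g • y)) = dist (φ x) (φ y) := by
    intro g x y
    conv_rhs => rw [heq g x, heq g y]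
    rw [hright, hleft]
  set U : Set X := φ ⁻¹' Metric.ball (φ a) ε with hUdef
  set V : Set X := φ ⁻¹' Metric.ball (φ b) ε with hVdef
  have hUo : IsOpen U := hφ.isOpen_preimage _ Metric.isOpen_ball
  have hVo : IsOpen V := hφ.isOpen_preimage _ Metric.isOpen_ball
  have haU : a ∈ U := by simp [hUdef, hεpos]
  have hbV : b ∈ V := by simp [hVdef, hεpos]
  obtain ⟨F₁, hF₁, h₁⟩ := hmix U U hUo hUo ⟨a, haU⟩ ⟨a, haU⟩
  obtain ⟨F₂, hF₂, h₂⟩ := hmix U V hUo hVo ⟨a, haU⟩ ⟨b, hbV⟩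
  obtain ⟨g, hg⟩ := ((hF₁.union hF₂).infinite_compl).nonempty
  rw [Set.compl_union] at hg
  obtain ⟨p, ⟨u₁, hu₁U, rfl⟩, hp₁⟩ := h₁ g hg.1
  obtain ⟨q, ⟨u₂, hu₂U, rfl⟩, hq₂⟩ := h₂ g hg.2
  have e1 : dist (φ (g • u₁)) (φ a) < ε := hp₁
  have e2 : dist (φ (g • u₂)) (φ b) < ε := hq₂
  have e3 : dist (φ u₁) (φ a) < ε := hu₁U
  have e4 : dist (φ u₂) (φ a) < ε := hu₂U
  have emid : dist (φ (g • u₁)) (φ (g • u₂)) ≤ dist (φ u₁) (φ a) + dist (φ u₂) (φ a) := by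
    rw [hinv]
    calc dist (φ u₁) (φ u₂) ≤ dist (φ u₁) (φ a) + dist (φ a) (φ u₂) := dist_triangle _ _ _
      _ = dist (φ u₁) (φ a) + dist (φ u₂) (φ a) := by rw [dist_comm (φ a)]
  have htri : D ≤ dist (φ a) (φ (g • u₁)) + dist (φ (g • u₁)) (φ (g • u₂))
      + dist (φ (g • u₂)) (φ b) := dist_triangle4 _ _ _ _
  rw [dist_comm (φ a)] at htri
  have : D < 4 * ε := by linarith
  rw [hεdef] at this
  linarith
end
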